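/- In the FT Cycle-Cover protocol with fault notifications (q₁ with fault flag becomes q₀, q₂ with fault flag becomes q₁, each decrementing the recorded degree appropriately), the degree invariant (q₀ ↔ degree 0, q₁ ↔ degree 1, q₂ ↔ degree 2) is preserved under both ordinary transitions and crash-fault transitions. -/
import Mathlib


/-- Configurations of the FT Cycle-Cover protocol with crash faults: alive
nodes, node states (`0`, `1`, `2` encoding `q₀, q₁, q₂`), and active edges. -/
structure CycleConf (V : Type*) where
  alive : Finset V
  state : V → ℕ
  edges : Finset (Sym2 V)

/-- The degree of a node: the number of active incident edges. -/
def cycleDeg {V : Type*} [DecidableEq V] (C : CycleConf V) (u : V) : ℕ :=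
  (C.edges.filter (fun p => u ∈ p)).card

/-- δ₁ transitions of FT Cycle-Cover:
`(q₀,q₀,0)→(q₁,q₁,1)`, `(q₁,q₀,0)→(q₂,q₁,1)`, `(q₁,q₁,0)→(q₂,q₂,1)`. -/
inductive CycleStep {V : Type*} [DecidableEq V] : CycleConf V → CycleConf V → Prop
  | q00 (C : CycleConf V) (u v : V) (hua : u ∈ C.alive) (hva : v ∈ C.alive)
      (hne : u ≠ v) (hu : C.state u = 0) (hv : C.state v = 0)
      (he : s(u, v) ∉ C.edges) :
      CycleStep C ⟨C.alive, Function.update (Function.update C.state u 1) v 1,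
        insert s(u, v) C.edges⟩
  | q10 (C : CycleConf V) (u v : V) (hua : u ∈ C.alive) (hva : v ∈ C.alive)
      (hne : u ≠ v) (hu : C.state u = 1) (hv : C.state v = 0)
      (he : s(u, v) ∉ C.edges) :
      CycleStep C ⟨C.alive, Function.update (Function.update C.state u 2) v 1,
        insert s(u, v) C.edges⟩
  | q11 (C : CycleConf V) (u v : V) (hua : u ∈ C.alive) (hva : v ∈ C.alive)
      (hne : u ≠ v) (hu : C.state u = 1) (hv : C.state v = 1)
      (he : s(u, v) ∉ C.edges) :
      CycleStep C ⟨C.alive, Function.update (Function.update C.state u 2) v 2,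
        insert s(u, v) C.edges⟩

open Classical in
/-- Crash of node `u` with notifications (δ₂ rules `(q₁,1)→(q₀,0)`,
`(q₂,1)→(q₁,0)`): `u` and its incident active edges are removed, and each
former neighbor of `u` decrements its state by one. -/
def CycleCrash {V : Type*} [DecidableEq V] (C C' : CycleConf V) : Prop :=
  ∃ u ∈ C.alive, C' = ⟨C.alive.erase u,
    (fun v => if v ≠ u ∧ s(u, v) ∈ C.edges then C.state v - 1 else C.state v),
    C.edges.filter (fun p => ¬ u ∈ p)⟩

section Aux
variable {V : Type*} [DecidableEq V]

lemma aux_filter_both_eq (E : Finset (Sym2 V)) (u w : V) (hne : u ≠ w) :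
    E.filter (fun p => u ∈ p ∧ w ∈ p) = if s(u, w) ∈ E then {s(u, w)} else ∅ := by
  ext p
  simp only [Finset.mem_filter]
  split <;> rename_i h
  · simp only [Finset.mem_singleton]
    constructor
    · rintro ⟨_, hu, hw⟩; exact (Sym2.mem_and_mem_iff hne).mp ⟨hu, hw⟩
    · rintro rfl; exact ⟨h, Sym2.mem_mk_left _ _, Sym2.mem_mk_right _ _⟩
  · simp only [Finset.notMem_empty, iff_false]
    rintro ⟨hp, hu, hw⟩
    exact h (((Sym2.mem_and_mem_iff hne).mp ⟨hu, hw⟩) ▸ hp)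

lemma aux_crash_deg (E : Finset (Sym2 V)) (u w : V) (hne : w ≠ u) :
    ((E.filter (fun p => ¬ u ∈ p)).filter (fun p => w ∈ p)).card
      + (if s(u, w) ∈ E then 1 else 0) = (E.filter (fun p => w ∈ p)).card := by
  have key := Finset.card_filter_add_card_filter_not
    (s := E.filter (fun p => w ∈ p)) (p := fun p => u ∈ p)
  rw [Finset.filter_filter, Finset.filter_filter] at key
  have h1 : E.filter (fun p => w ∈ p ∧ u ∈ p) = if s(u, w) ∈ E then {s(u, w)} else ∅ := by
    rw [← aux_filter_both_eq E u w (Ne.symm hne)]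
    simp only [and_comm]
  have h2 : (E.filter (fun p => ¬ u ∈ p)).filter (fun p => w ∈ p)
      = E.filter (fun p => w ∈ p ∧ ¬ u ∈ p) := by
    rw [Finset.filter_filter]; simp only [and_comm]
  rw [h2, add_comm, ← key, h1]
  split <;> simp

lemma aux_insert_deg (E : Finset (Sym2 V)) (e : Sym2 V) (he : e ∉ E) (w : V) :
    ((insert e E).filter (fun p => w ∈ p)).card
      = (E.filter (fun p => w ∈ p)).card + if w ∈ e then 1 else 0 := by
  rw [Finset.filter_insert]
  split
  · rw [Finset.card_insert_of_notMem (fun h => he (Finset.mem_filter.mp h).1)]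
  · simp
end Aux

/-- Invariant of FT Cycle-Cover with fault notifications: in every
configuration reachable via ordinary and crash-fault transitions from the
all-`q₀` edgeless initial configuration, the degree of each alive node equals
its state, and all states are at most 2. -/
theorem stmt_14 {V : Type*} [Fintype V] [DecidableEq V] (C : CycleConf V)
    (hreach : Relation.ReflTransGen (fun C₁ C₂ => CycleStep C₁ C₂ ∨ CycleCrash C₁ C₂)
      ⟨Finset.univ, fun _ => 0, ∅⟩ C) :
    ∀ u ∈ C.alive, cycleDeg C u = C.state u ∧ C.state u ≤ 2 := by
  induction hreach with
  | refl => intro u _; simp [cycleDeg]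
  | tail _ hstep ih =>
    rename_i b c _
    rcases hstep with hstep | hcrash
    · cases hstep <;>
      · rename_i u v hua hva hne hu hv he
        intro w hw
        obtain ⟨ihd, ihs⟩ := ih w hw
        simp only [cycleDeg] at ihd ⊢
        rw [aux_insert_deg b.edges s(u, v) he w]
        by_cases hwv : w = v
        · subst hwv
          rw [if_pos (Sym2.mem_mk_right u w)]
          simp only [Function.update_self]
          omega
        · by_cases hwu : w = u
          · subst hwu
            rw [if_pos (Sym2.mem_mk_left w v)]
            simp only [Function.update_of_ne hne, Function.update_self]
            omega
          · rw [if_neg (by simp [Sym2.mem_iff, hwu, hwv])]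
            simp only [Function.update_of_ne hwv, Function.update_of_ne hwu]
            omega
    · obtain ⟨u, hu, rfl⟩ := hcrash
      intro w hw
      rw [Finset.mem_erase] at hw
      obtain ⟨hwu, hwa⟩ := hw
      obtain ⟨ihd, ihs⟩ := ih w hwa
      have hdeg := aux_crash_deg b.edges u w hwu
      simp only [cycleDeg] at *
      by_cases hm : s(u, w) ∈ b.edges
      · rw [if_pos hm] at hdeg
        rw [if_pos ⟨hwu, hm⟩]
        have hge : (b.edges.filter (fun p => w ∈ p)).card ≥ 1 := by omega
        omega
      · rw [if_neg hm] at hdeg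
        rw [if_neg (by rintro ⟨_, h⟩; exact hm h)]
        omega
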